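/- arXiv:0903.3180 — 2 statements merged into one kernel-verified Lean document; each statement's English description precedes it below -/
import Mathlib

section
/- Let q ≥ 0 be a fixed integer and let λ_j = 2πj/n denote the Fourier frequencies. Then there exist a constant η > 0 and N ∈ ℕ such that for all n ≥ N and all real numbers a_0, a_1, …, a_q, one has n^{-1} ∑_{j=1}^{⌊n/2⌋} (j/n)^{2q+1} | ∑_{r=0}^{q} (1 − e^{iλ_j})^{-r} a_r |^2 ≥ η ∑_{r=0}^{q} a_r^2. -/
/-!
Take `q + 1` frequencies `x_k ∈ [1/4, 1/2)`. The nodes `(1 - e^{2πi x_k})⁻¹` are distinct, so the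
Vandermonde matrix is invertible and `∑_k |∑_r (1 - e^{2πi x_k})^{-r} a_r|² ≥ c ∑_r a_r²`; hence a
single node carries a fixed fraction of `∑_r a_r²`. Where `cos ≤ 0`, `λ ↦ (1 - e^{iλ})⁻¹` is
`1`-Lipschitz with values in the unit disc, so the polynomial stays large on an interval of fixed
length `δ` to the right of that node. About `nδ` of the points `j/n` fall into it, each contributing
at least `4^{-(2q+1)}` times a fixed fraction of `∑_r a_r²`.
-/

open Complex Finset

noncomputable def invOneSubExp (l : ℝ) : ℂ := (1 - exp (I * l))⁻¹

noncomputable def polyEval {m : ℕ} (a : Fin m → ℝ) (z : ℂ) : ℂ :=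
  ∑ r : Fin m, z ^ (r : ℕ) * (a r : ℂ)

lemma norm_pow_sub_pow_le_of_norm_le_one {R : Type*} [SeminormedCommRing R] [NormOneClass R]
    {z w : R} (hz : ‖z‖ ≤ 1) (hw : ‖w‖ ≤ 1) (n : ℕ) : ‖z ^ n - w ^ n‖ ≤ n * ‖z - w‖ := by
  have hterm (i j : ℕ) : ‖z ^ i * w ^ j‖ ≤ 1 :=
    (norm_mul_le _ _).trans <|
      mul_le_one₀ ((norm_pow_le z i).trans (pow_le_one₀ (norm_nonneg _) hz)) (norm_nonneg _)
        ((norm_pow_le w j).trans (pow_le_one₀ (norm_nonneg _) hw))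
  rw [← geom_sum₂_mul]
  refine (norm_mul_le _ _).trans (mul_le_mul_of_nonneg_right ?_ (norm_nonneg _))
  refine (norm_sum_le _ _).trans ?_
  simpa using sum_le_sum fun i (_ : i ∈ range n) => hterm i (n - 1 - i)

lemma norm_polyEval_sub_le {m : ℕ} (a : Fin m → ℝ) {z w : ℂ} (hz : ‖z‖ ≤ 1) (hw : ‖w‖ ≤ 1) :
    ‖polyEval a z - polyEval a w‖ ≤ (∑ r : Fin m, (r : ℝ) * |a r|) * ‖z - w‖ := by
  rw [polyEval, polyEval, ← sum_sub_distrib, sum_mul]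
  refine (norm_sum_le _ _).trans (sum_le_sum fun r _ => ?_)
  rw [← sub_mul, norm_mul, norm_real, Real.norm_eq_abs, mul_right_comm]
  gcongr
  exact norm_pow_sub_pow_le_of_norm_le_one hz hw r

lemma exists_pos_mul_sum_sq_le_sum_norm_polyEval_sq {m : ℕ} {w : Fin m → ℂ}
    (hw : Function.Injective w) :
    ∃ c > 0, ∀ a : Fin m → ℝ, c * ∑ r, a r ^ 2 ≤ ∑ k, ‖polyEval a (w k)‖ ^ 2 := by
  let f : EuclideanSpace ℝ (Fin m) →ₗ[ℝ] EuclideanSpace ℂ (Fin m) :=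
    { toFun := fun a => WithLp.toLp 2 fun k => polyEval a (w k)
      map_add' := fun a b => by ext k; simp [polyEval, mul_add, sum_add_distrib]
      map_smul' := fun t a => by ext k; simp [polyEval, mul_sum, mul_left_comm] }
  have hf : Function.Injective f := by
    rw [← LinearMap.ker_eq_bot, LinearMap.ker_eq_bot']
    intro a ha
    have hv := Matrix.eq_zero_of_forall_index_sum_pow_mul_eq_zero hw
      (v := fun r => (a r : ℂ)) fun k => congrArg (· k) ha
    ext r
    simpa using congrFun hv r
  obtain ⟨K, hK, hanti⟩ := f.injective_iff_antilipschitz.mp hf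
  refine ⟨((K : ℝ) ^ 2)⁻¹, by positivity, fun a => ?_⟩
  have hbound := ZeroHomClass.bound_of_antilipschitz f hanti (WithLp.toLp 2 a)
  have hsq := pow_le_pow_left₀ (norm_nonneg _) hbound 2
  rw [mul_pow, EuclideanSpace.norm_sq_eq, EuclideanSpace.norm_sq_eq] at hsq
  rw [inv_mul_le_iff₀ (by positivity)]
  simpa [f] using hsq

lemma one_le_norm_one_sub_exp_I_mul {l : ℝ} (hl : Real.cos l ≤ 0) : 1 ≤ ‖1 - exp (I * l)‖ :=
  calc (1 : ℝ) ≤ 1 - Real.cos l := by linarith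
    _ = (1 - exp (I * l)).re := by simp [mul_comm I, exp_ofReal_mul_I_re]
    _ ≤ ‖1 - exp (I * l)‖ := re_le_norm _

lemma norm_invOneSubExp_le_one {l : ℝ} (hl : Real.cos l ≤ 0) : ‖invOneSubExp l‖ ≤ 1 := by
  rw [invOneSubExp, norm_inv]
  exact inv_le_one_of_one_le₀ (one_le_norm_one_sub_exp_I_mul hl)

lemma norm_invOneSubExp_sub_le {l m : ℝ} (hl : Real.cos l ≤ 0) (hm : Real.cos m ≤ 0) :
    ‖invOneSubExp l - invOneSubExp m‖ ≤ |l - m| := by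
  have hl0 : 1 - exp (I * l) ≠ 0 :=
    norm_pos_iff.mp (one_pos.trans_le (one_le_norm_one_sub_exp_I_mul hl))
  have hm0 : 1 - exp (I * m) ≠ 0 :=
    norm_pos_iff.mp (one_pos.trans_le (one_le_norm_one_sub_exp_I_mul hm))
  have hdiff : invOneSubExp l - invOneSubExp m =
      exp (I * m) * (exp (I * ↑(l - m)) - 1) * (invOneSubExp l * invOneSubExp m) := by
    rw [invOneSubExp, invOneSubExp, mul_sub, ofReal_sub, mul_sub, exp_sub]
    field_simp
    ring
  rw [hdiff, norm_mul, norm_mul, norm_exp_I_mul_ofReal, one_mul, norm_mul, ← Real.norm_eq_abs]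
  calc ‖exp (I * ↑(l - m)) - 1‖ * (‖invOneSubExp l‖ * ‖invOneSubExp m‖) ≤ ‖l - m‖ * (1 * 1) := by
        gcongr
        exacts [Real.norm_exp_I_mul_ofReal_sub_one_le, norm_invOneSubExp_le_one hl,
          norm_invOneSubExp_le_one hm]
    _ = ‖l - m‖ := by ring

lemma invOneSubExp_injOn : Set.InjOn invOneSubExp (Set.Icc 0 Real.pi) := by
  intro l hl m hm h
  have hexp : exp (I * l) = exp (I * m) := by simpa [invOneSubExp] using h
  apply Real.injOn_cos hl hm
  simpa [mul_comm I, exp_ofReal_mul_I_re] using congrArg re hexp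

lemma norm_polyEval_invOneSubExp_sq_le {m : ℕ} (a : Fin m → ℝ) {l μ : ℝ}
    (hl : Real.cos l ≤ 0) (hμ : Real.cos μ ≤ 0) :
    ‖polyEval a (invOneSubExp μ)‖ ^ 2 ≤ 2 * ‖polyEval a (invOneSubExp l)‖ ^ 2 +
      2 * (∑ r : Fin m, (r : ℝ) ^ 2) * (∑ r, a r ^ 2) * (l - μ) ^ 2 := by
  set L := ∑ r : Fin m, (r : ℝ) * |a r|
  have hlip : ‖polyEval a (invOneSubExp μ) - polyEval a (invOneSubExp l)‖ ≤ L * |l - μ| := by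
    refine (norm_polyEval_sub_le a (norm_invOneSubExp_le_one hμ)
      (norm_invOneSubExp_le_one hl)).trans (mul_le_mul_of_nonneg_left ?_ ?_)
    · rw [abs_sub_comm]
      exact norm_invOneSubExp_sub_le hμ hl
    · exact sum_nonneg fun r _ => by positivity
  have hcs : L ^ 2 ≤ (∑ r : Fin m, (r : ℝ) ^ 2) * ∑ r, a r ^ 2 := by
    simpa only [sq_abs] using sum_mul_sq_le_sq_mul_sq univ (fun r : Fin m => (r : ℝ)) fun r => |a r|
  have htri :=
    norm_le_norm_add_norm_sub' (polyEval a (invOneSubExp μ)) (polyEval a (invOneSubExp l))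
  calc ‖polyEval a (invOneSubExp μ)‖ ^ 2
      ≤ (‖polyEval a (invOneSubExp l)‖ + L * |l - μ|) ^ 2 := by gcongr; exact htri.trans (by gcongr)
    _ ≤ 2 * ‖polyEval a (invOneSubExp l)‖ ^ 2 + 2 * L ^ 2 * (l - μ) ^ 2 := by
      rw [← sq_abs (l - μ)]
      nlinarith [sq_nonneg (‖polyEval a (invOneSubExp l)‖ - L * |l - μ|)]
    _ ≤ _ := by linarith [mul_le_mul_of_nonneg_right hcs (sq_nonneg (l - μ))]

lemma cos_two_pi_mul_nonpos {x : ℝ} (hx₁ : 1 / 4 ≤ x) (hx₂ : x ≤ 1 / 2) :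
    Real.cos (2 * Real.pi * x) ≤ 0 :=
  Real.cos_nonpos_of_pi_div_two_le_of_le (by nlinarith [Real.pi_pos]) (by nlinarith [Real.pi_pos])

lemma exists_node_lower_bound (q : ℕ) :
    ∃ c > 0, ∀ a : Fin (q + 1) → ℝ, ∃ u ∈ Set.Icc (1 / 4 : ℝ) (1 / 2 - 1 / (4 * (q + 1))),
      c * ∑ r, a r ^ 2 ≤ ‖polyEval a (invOneSubExp (2 * Real.pi * u))‖ ^ 2 := by
  set x : Fin (q + 1) → ℝ := fun k => 1 / 4 + k / (4 * (q + 1))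
  have hx (k : Fin (q + 1)) : x k ∈ Set.Icc (1 / 4 : ℝ) (1 / 2 - 1 / (4 * (q + 1))) := by
    have hk : (k : ℝ) + 1 ≤ q + 1 := by exact_mod_cast k.isLt
    constructor
    · simp only [x]; linarith [show (0 : ℝ) ≤ k / (4 * (q + 1)) by positivity]
    · simp only [x]; rw [← sub_nonneg]
      field_simp
      linarith
  have hxπ (k : Fin (q + 1)) : 2 * Real.pi * x k ∈ Set.Icc 0 Real.pi := by
    obtain ⟨h₁, h₂⟩ := hx k
    have : 1 / (4 * ((q : ℝ) + 1)) ≥ 0 := by positivity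
    constructor <;> nlinarith [Real.pi_pos]
  have hinj : Function.Injective fun k => invOneSubExp (2 * Real.pi * x k) := by
    intro k k' h
    have h' := mul_left_cancel₀ (by positivity) (invOneSubExp_injOn (hxπ k) (hxπ k') h)
    simp only [x, add_right_inj] at h'
    field_simp at h'
    exact Fin.ext (by exact_mod_cast h')
  obtain ⟨c, hc, hsum⟩ := exists_pos_mul_sum_sq_le_sum_norm_polyEval_sq hinj
  refine ⟨c / (q + 1), by positivity, fun a => ?_⟩
  obtain ⟨k, -, hk⟩ := exists_le_of_sum_le univ_nonempty
    (f := fun _ => c / (q + 1) * ∑ r, a r ^ 2)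
    (g := fun k => ‖polyEval a (invOneSubExp (2 * Real.pi * x k))‖ ^ 2)
    (by simpa [field] using hsum a)
  exact ⟨x k, hx k, hk⟩

lemma exists_lower_bound_on_interval (q : ℕ) :
    ∃ ε > 0, ∃ δ > 0, ∀ a : Fin (q + 1) → ℝ, ∃ u, 1 / 4 ≤ u ∧ u + δ ≤ 1 / 2 ∧
      ∀ x ∈ Set.Icc u (u + δ), ε * ∑ r, a r ^ 2 ≤
        x ^ (2 * q + 1) * ‖polyEval a (invOneSubExp (2 * Real.pi * x))‖ ^ 2 := by
  obtain ⟨c, hc, hnode⟩ := exists_node_lower_bound q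
  set C := ∑ r : Fin (q + 1), (r : ℝ) ^ 2
  set δ : ℝ := min (1 / (4 * (q + 1))) (c / (16 * Real.pi ^ 2 * (C + 1)))
  have hδ : 0 < δ := by positivity
  have hδ₁ : δ ≤ 1 / (4 * (q + 1)) := min_le_left _ _
  have hδ₂ : δ ≤ c / (16 * Real.pi ^ 2 * (C + 1)) := min_le_right _ _
  refine ⟨(1 / 4) ^ (2 * q + 1) * (c / 4), by positivity, δ, hδ, fun a => ?_⟩
  obtain ⟨u, ⟨hu₁, hu₂⟩, hu⟩ := hnode a
  refine ⟨u, hu₁, by linarith, fun x ⟨hx₁, hx₂⟩ => ?_⟩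
  set S := ∑ r, a r ^ 2
  have hS : 0 ≤ S := sum_nonneg fun r _ => sq_nonneg _
  have hpert := norm_polyEval_invOneSubExp_sq_le a
    (cos_two_pi_mul_nonpos (hu₁.trans hx₁) (by linarith)) (cos_two_pi_mul_nonpos hu₁ (by linarith))
  have hshift : 2 * C * (2 * Real.pi * x - 2 * Real.pi * u) ^ 2 ≤ c / 2 := by
    have hδ₃ : δ ≤ 1 := hδ₁.trans (by rw [div_le_one (by positivity)]; linarith)
    have hxu : (x - u) ^ 2 ≤ c / (16 * Real.pi ^ 2 * (C + 1)) := by nlinarith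
    rw [le_div_iff₀ (by positivity)] at hxu
    nlinarith [Real.pi_pos]
  have hP : c / 4 * S ≤ ‖polyEval a (invOneSubExp (2 * Real.pi * x))‖ ^ 2 := by
    nlinarith [mul_le_mul_of_nonneg_right hshift hS]
  calc (1 / 4) ^ (2 * q + 1) * (c / 4) * S = (1 / 4) ^ (2 * q + 1) * (c / 4 * S) := by ring
    _ ≤ _ := by
      have hx : 1 / 4 ≤ x := hu₁.trans hx₁
      have : 0 ≤ x ^ (2 * q + 1) := pow_nonneg (by linarith) _
      gcongr

lemma sub_sub_one_le_card_Icc_ceil_floor {x y : ℝ} (hx : 0 ≤ x) :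
    y - x - 1 ≤ (#(Icc ⌈x⌉₊ ⌊y⌋₊) : ℝ) := by
  rw [Nat.card_Icc]
  have hy := Nat.lt_floor_add_one y
  have hx' := Nat.ceil_lt_add_one hx
  rcases le_total ⌈x⌉₊ (⌊y⌋₊ + 1) with h | h
  · rw [Nat.cast_sub h]
    push_cast
    linarith
  · have : (⌊y⌋₊ + 1 : ℝ) ≤ ⌈x⌉₊ := by exact_mod_cast h
    linarith [(Nat.cast_nonneg _ : (0 : ℝ) ≤ ((⌊y⌋₊ + 1 - ⌈x⌉₊ : ℕ) : ℝ))]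

lemma mul_div_two_le_inv_mul_sum_Icc {F : ℝ → ℝ} (hF : ∀ x, 0 ≤ x → 0 ≤ F x) {ε u δ : ℝ}
    {n : ℕ} (hε : 0 ≤ ε) (hu : 0 < u) (huδ : u + δ ≤ 1 / 2) (hnδ : 2 ≤ n * δ)
    (hFε : ∀ x ∈ Set.Icc u (u + δ), ε ≤ F x) :
    ε * δ / 2 ≤ (n : ℝ)⁻¹ * ∑ j ∈ Icc 1 (n / 2), F (j / n) := by
  have hn : (0 : ℝ) < n := Nat.cast_pos.mpr (Nat.pos_of_ne_zero (by rintro rfl; norm_num at hnδ))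
  set J := Icc ⌈n * u⌉₊ ⌊n * (u + δ)⌋₊
  have hJ : J ⊆ Icc 1 (n / 2) := by
    intro j hj
    rw [mem_Icc] at hj ⊢
    refine ⟨(Nat.one_le_iff_ne_zero.mpr (Nat.ceil_pos.mpr (mul_pos hn hu)).ne').trans hj.1, ?_⟩
    refine hj.2.trans ?_
    rw [← Nat.floor_div_eq_div (K := ℝ)]
    exact Nat.floor_le_floor (by push_cast; nlinarith)
  have hFJ : ∀ j ∈ J, ε ≤ F (j / n) := by
    intro j hj
    rw [mem_Icc] at hj
    apply hFε
    have h₁ : n * u ≤ j := Nat.ceil_le.mp hj.1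
    have h₂ : (j : ℝ) ≤ n * (u + δ) := (Nat.le_floor_iff (by nlinarith)).mp hj.2
    constructor
    · rw [le_div_iff₀ hn]; linarith
    · rw [div_le_iff₀ hn]; linarith
  have hcard : n * δ / 2 ≤ (#J : ℝ) := by
    have := sub_sub_one_le_card_Icc_ceil_floor (y := n * (u + δ)) (mul_pos hn hu).le
    linarith
  calc ε * δ / 2 = (n : ℝ)⁻¹ * (n * δ / 2 * ε) := by field_simp
    _ ≤ (n : ℝ)⁻¹ * (#J * ε) := by gcongr
    _ ≤ (n : ℝ)⁻¹ * ∑ j ∈ J, F (j / n) := by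
      gcongr
      simpa using card_nsmul_le_sum J _ ε hFJ
    _ ≤ (n : ℝ)⁻¹ * ∑ j ∈ Icc 1 (n / 2), F (j / n) :=
      mul_le_mul_of_nonneg_left
        (sum_le_sum_of_subset_of_nonneg hJ fun j _ _ => hF _ (by positivity)) (by positivity)

/-- Lemma 8 of the paper.  For a fixed integer `q ≥ 0` there exist
`η > 0` and `N` such that for all `n ≥ N` and all reals `a₀, …, a_q`,
`n⁻¹ ∑_{j=1}^{⌊n/2⌋} (j/n)^{2q+1} |∑_{r=0}^q (1 - e^{iλ_j})^{-r} a_r|² ≥ η ∑_r a_r²`,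
where `λ_j = 2πj/n`. -/
theorem stmt_0 (q : ℕ) :
    ∃ η : ℝ, 0 < η ∧ ∃ N : ℕ, ∀ n : ℕ, N ≤ n → ∀ a : Fin (q + 1) → ℝ,
      η * ∑ r, (a r) ^ 2 ≤
        (n : ℝ)⁻¹ * ∑ j ∈ Finset.Icc 1 (n / 2),
          ((j : ℝ) / (n : ℝ)) ^ (2 * q + 1) *
            ‖∑ r : Fin (q + 1),
              (1 - Complex.exp (Complex.I * (2 * Real.pi * j / n))) ^ (-((r : ℕ) : ℤ)) *
                (a r : ℂ)‖ ^ 2 := by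
  obtain ⟨ε, hε, δ, hδ, hbound⟩ := exists_lower_bound_on_interval q
  refine ⟨ε * δ / 2, by positivity, ⌈2 / δ⌉₊, fun n hn a => ?_⟩
  obtain ⟨u, hu, huδ, hu_bound⟩ := hbound a
  have hnδ : 2 ≤ n * δ := (div_le_iff₀ hδ).mp ((Nat.le_ceil _).trans (by exact_mod_cast hn))
  have hsummand (j : ℕ) (r : Fin (q + 1)) :
      (1 - exp (I * (2 * Real.pi * j / n))) ^ (-((r : ℕ) : ℤ)) =
        invOneSubExp (2 * Real.pi * (j / n)) ^ (r : ℕ) := by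
    rw [zpow_neg, zpow_natCast, invOneSubExp, inv_pow]
    push_cast
    ring_nf
  simp only [hsummand]
  calc ε * δ / 2 * ∑ r, a r ^ 2 = ε * (∑ r, a r ^ 2) * δ / 2 := by ring
    _ ≤ _ := mul_div_two_le_inv_mul_sum_Icc
      (F := fun x => x ^ (2 * q + 1) * ‖polyEval a (invOneSubExp (2 * Real.pi * x))‖ ^ 2)
      (fun x hx => by positivity) (by positivity) (by linarith) huδ hnδ hu_bound
end

section
/- Let γ : ℤ → ℝ be even with ∑_{k∈ℤ} |γ(k)| < ∞ and ∑_{k∈ℤ} |k γ(k)| < ∞. Then there exists a constant C, depending only on γ, such that for every n ≥ 2 and all integers 1 ≤ j, k ≤ n−1 with j + k ≠ n, | ∑_{t=1}^{n} ∑_{s=1}^{n} γ(t−s) e^{i(t λ_j + s λ_k)} | ≤ C, where λ_j = 2πj/n. -/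
/-!
Substituting `t = s + h`, the double sum becomes
`∑_h γ(h) e^{i h λ_j} ∑_{s ∈ [1, n], s + h ∈ [1, n]} z^s` with `z = e^{i(λ_j + λ_k)}`.
Since `j + k ≠ n`, `z` is an `n`-th root of unity other than `1`, so `∑_{s=1}^n z^s = 0` and each
inner sum is minus a sum of at most `|h|` unit terms. Hence the double sum is bounded by
`∑_h |h γ(h)|`.
-/

open Finset

theorem sum_Icc_one_pow_eq_zero {R : Type*} [DivisionRing R] {z : R} {n : ℕ} (hzn : z ^ n = 1)
    (hz : z ≠ 1) : ∑ s ∈ Icc 1 n, z ^ s = 0 := by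
  rw [← Ico_add_one_right_eq_Icc, geom_sum_Ico hz (by omega), pow_succ, hzn, one_mul, pow_one,
    sub_self, zero_div]

theorem IsPrimitiveRoot.sum_Icc_pow_pow_eq_zero {K : Type*} [Field K] {ζ : K} {n m : ℕ}
    (hζ : IsPrimitiveRoot ζ n) (hm : ¬ n ∣ m) : ∑ s ∈ Icc 1 n, (ζ ^ m) ^ s = 0 :=
  sum_Icc_one_pow_eq_zero (by rw [← pow_mul, mul_comm, pow_mul, hζ.pow_eq_one, one_pow])
    (mt (hζ.pow_eq_one_iff_dvd m).mp hm)

theorem norm_sum_le_card_sdiff {ι E : Type*} [SeminormedAddCommGroup E] [DecidableEq ι]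
    {f : ι → E} {T U : Finset ι} (hTU : T ⊆ U) (hU : ∑ i ∈ U, f i = 0)
    (hf : ∀ i ∈ U, ‖f i‖ ≤ 1) : ‖∑ i ∈ T, f i‖ ≤ #(U \ T) := by
  have hT : ∑ i ∈ T, f i = -∑ i ∈ U \ T, f i := by
    rw [eq_neg_iff_add_eq_zero, add_comm, sum_sdiff hTU, hU]
  rw [hT, norm_neg]
  simpa using norm_sum_le_of_le (U \ T) fun i hi => hf i (sdiff_subset hi)

theorem card_filter_add_notMem_Icc_le (n : ℕ) (h : ℤ) :
    #((Icc 1 n).filter fun s : ℕ => (s : ℤ) + h ∉ Icc 1 (n : ℤ)) ≤ h.natAbs := by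
  rcases le_or_gt 0 h with hh | hh
  · calc _ ≤ #(Ioc (n - h.toNat) n) := card_le_card fun s hs => by
          simp only [mem_filter, mem_Icc, mem_Ioc] at hs ⊢; omega
      _ ≤ h.natAbs := by rw [Nat.card_Ioc]; omega
  · calc _ ≤ #(Icc 1 h.natAbs) := card_le_card fun s hs => by
          simp only [mem_filter, mem_Icc] at hs ⊢; omega
      _ = h.natAbs := by simp

theorem sum_Icc_sum_Icc_sub_eq_sum_Ioo {M : Type*} [AddCommMonoid M] (n : ℕ) (F : ℤ → ℕ → M) :
    ∑ t ∈ Icc 1 n, ∑ s ∈ Icc 1 n, F ((t : ℤ) - s) s =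
      ∑ h ∈ Ioo (-n : ℤ) n, ∑ s ∈ (Icc 1 n).filter fun s : ℕ => (s : ℤ) + h ∈ Icc 1 (n : ℤ),
        F h s := by
  have shift : ∀ s ∈ Icc 1 n, ∑ t ∈ Icc 1 n, F ((t : ℤ) - s) s =
      ∑ h ∈ (Ioo (-n : ℤ) n).filter fun h => (s : ℤ) + h ∈ Icc 1 (n : ℤ), F h s := by
    intro s hs
    simp only [mem_Icc] at hs
    refine sum_nbij' (fun t => (t : ℤ) - s) (fun h => ((s : ℤ) + h).toNat) ?_ ?_ ?_ ?_ ?_ <;>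
      intros <;> simp_all <;> omega
  rw [sum_comm, sum_congr rfl shift]
  exact sum_comm' fun s h => by simp only [mem_filter, mem_Icc, mem_Ioo]; omega

theorem norm_sum_sum_sub_mul_le {R : Type*} [SeminormedRing R] {n : ℕ} (g : ℤ → R) {f : ℕ → R}
    (hf : ∑ s ∈ Icc 1 n, f s = 0) (hf_le : ∀ s ∈ Icc 1 n, ‖f s‖ ≤ 1) :
    ‖∑ t ∈ Icc 1 n, ∑ s ∈ Icc 1 n, g ((t : ℤ) - s) * f s‖ ≤
      ∑ h ∈ Ioo (-n : ℤ) n, |(h : ℝ)| * ‖g h‖ := by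
  simp_rw [sum_Icc_sum_Icc_sub_eq_sum_Ioo n fun h s => g h * f s, ← mul_sum]
  refine norm_sum_le_of_le _ fun h _ => (norm_mul_le _ _).trans ?_
  rw [mul_comm]
  gcongr
  calc _ ≤ (#((Icc 1 n).filter fun s : ℕ => (s : ℤ) + h ∉ Icc 1 (n : ℤ)) : ℝ) := by
        rw [filter_not]
        exact norm_sum_le_card_sdiff (filter_subset _ _) hf hf_le
    _ ≤ h.natAbs := by exact_mod_cast card_filter_add_notMem_Icc_le n h
    _ = |(h : ℝ)| := by simp

theorem mul_exp_I_mul_add_eq (c α β : ℂ) (t s : ℕ) :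
    c * Complex.exp (Complex.I * (t * α + s * β)) =
      c * Complex.exp (Complex.I * (((t : ℤ) - s : ℤ) * α)) *
        Complex.exp (Complex.I * (α + β)) ^ s := by
  rw [mul_assoc, ← Complex.exp_nat_mul, ← Complex.exp_add]
  push_cast
  ring_nf

theorem stmt_6_general (γ : ℤ → ℝ)
    (h2 : Summable fun k : ℤ => |(k : ℝ) * γ k|) :
    ∃ C : ℝ, ∀ n : ℕ, 2 ≤ n → ∀ j k : ℕ,
      1 ≤ j → j ≤ n - 1 → 1 ≤ k → k ≤ n - 1 → j + k ≠ n →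
      ‖∑ t ∈ Finset.Icc 1 n, ∑ s ∈ Finset.Icc 1 n,
        ((γ ((t : ℤ) - (s : ℤ)) : ℝ) : ℂ) *
          Complex.exp (Complex.I *
            ((t : ℂ) * (2 * (Real.pi : ℂ) * j / n) + (s : ℂ) * (2 * (Real.pi : ℂ) * k / n)))‖ ≤ C := by
  refine ⟨∑' h : ℤ, |(h : ℝ) * γ h|, fun n hn j k hj1 hj2 hk1 hk2 hjk => ?_⟩
  have hn0 : n ≠ 0 := by omega
  set ζ := Complex.exp (2 * Real.pi * Complex.I / n)
  have hζ : IsPrimitiveRoot ζ n := Complex.isPrimitiveRoot_exp n hn0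
  have hz : Complex.exp (Complex.I * (2 * Real.pi * j / n + 2 * Real.pi * k / n)) =
      ζ ^ (j + k) := by
    rw [← Complex.exp_nat_mul]; push_cast; ring_nf
  have hndvd : ¬ n ∣ j + k := fun hdvd =>
    hjk (Nat.eq_of_dvd_of_lt_two_mul (by omega) hdvd (by omega))
  have hgeom : ∑ s ∈ Icc 1 n, (ζ ^ (j + k)) ^ s = 0 := hζ.sum_Icc_pow_pow_eq_zero hndvd
  simp_rw [mul_exp_I_mul_add_eq, hz]
  calc _ ≤ ∑ h ∈ Ioo (-n : ℤ) n,
        |(h : ℝ)| * ‖(γ h : ℂ) * Complex.exp (Complex.I * (h * (2 * Real.pi * j / n)))‖ :=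
        norm_sum_sum_sub_mul_le _ hgeom fun s _ => by
          rw [norm_pow, norm_pow, hζ.norm'_eq_one hn0, one_pow, one_pow]
    _ = ∑ h ∈ Ioo (-n : ℤ) n, |(h : ℝ) * γ h| := by
        simp [Complex.norm_exp, abs_mul]
    _ ≤ _ := h2.sum_le_tsum _ fun _ _ => abs_nonneg _

/-- step in Lemma 7 of the paper.  For an even, absolutely summable
covariance function `γ` with `∑ |k γ(k)| < ∞`, the double sums
`∑_{t,s=1}^n γ(t-s) e^{i(tλ_j + sλ_k)}` are uniformly bounded over `n ≥ 2` and
`1 ≤ j, k ≤ n-1` with `j + k ≠ n`, where `λ_j = 2πj/n`. -/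
theorem stmt_6 (γ : ℤ → ℝ) (heven : ∀ k, γ (-k) = γ k)
    (h1 : Summable fun k : ℤ => |γ k|)
    (h2 : Summable fun k : ℤ => |(k : ℝ) * γ k|) :
    ∃ C : ℝ, ∀ n : ℕ, 2 ≤ n → ∀ j k : ℕ,
      1 ≤ j → j ≤ n - 1 → 1 ≤ k → k ≤ n - 1 → j + k ≠ n →
      ‖∑ t ∈ Finset.Icc 1 n, ∑ s ∈ Finset.Icc 1 n,
        ((γ ((t : ℤ) - (s : ℤ)) : ℝ) : ℂ) *
          Complex.exp (Complex.I *
            ((t : ℂ) * (2 * (Real.pi : ℂ) * j / n) + (s : ℂ) * (2 * (Real.pi : ℂ) * k / n)))‖ ≤ C :=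
  stmt_6_general γ h2
end
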